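/- Let (Xₙ) be a random walk with P(ξ > 0) > 0, q ≥ 0, and g : ℝ → [0,∞) nonconstant, increasing, logconcave. Suppose E_y[e^{-q T_y} g(X_{T_y}) 1_{T_y<∞}] ≤ g(y) for some y > x₀ := inf{s : g(s) > 0}. Then g(y) ≥ E_y[e^{-q τ_a} g(X_{τ_a}) 1_{τ_a<∞}] for every a > y. -/

import Mathlib

open MeasureTheory ProbabilityTheory Real

variable {Ω : Type*}

/-- The random walk `X n = x + ξ 1 + ... + ξ n` (increments indexed from 1). -/
noncomputable def walk (x : ℝ) (ξ : ℕ → Ω → ℝ) (n : ℕ) (ω : Ω) : ℝ :=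
  x + ∑ i ∈ Finset.range n, ξ (i + 1) ω

/-- `τ_v`: first time `n ≥ 0` with `X n ≥ v` (`⊤` if never). -/
noncomputable def hitFrom0 (X : ℕ → Ω → ℝ) (v : ℝ) (ω : Ω) : ℕ∞ :=
  ⨅ n ∈ {n : ℕ | v ≤ X n ω}, (n : ℕ∞)

/-- `T_v`: first time `n ≥ 1` with `X n ≥ v` (`⊤` if never). -/
noncomputable def hitFrom1 (X : ℕ → Ω → ℝ) (v : ℝ) (ω : Ω) : ℕ∞ :=
  ⨅ n ∈ {n : ℕ | 1 ≤ n ∧ v ≤ X n ω}, (n : ℕ∞)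

/-- The discounted reward `e^{-qτ} g(X_τ) 1_{τ<∞}`, as an `ℝ≥0∞`-valued r.v. -/
noncomputable def payoff (q : ℝ) (g : ℝ → ℝ) (X : ℕ → Ω → ℝ) (τ : Ω → ℕ∞) (ω : Ω) : ENNReal :=
  if τ ω = ⊤ then 0
  else ENNReal.ofReal (Real.exp (-q * ((τ ω).toNat : ℝ)) * g (X ((τ ω).toNat) ω))

/-- The natural filtration (as σ-algebras) of the process `X`. -/
def natSigma [MeasurableSpace Ω] (X : ℕ → Ω → ℝ) (n : ℕ) : MeasurableSpace Ω :=
  ⨆ i ∈ Set.Iic n, MeasurableSpace.comap (X i) inferInstance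

/-- `τ` is a stopping time (with values in `ℕ ∪ {∞}`) of the natural filtration of `X`. -/
def IsStopping [MeasurableSpace Ω] (X : ℕ → Ω → ℝ) (τ : Ω → ℕ∞) : Prop :=
  ∀ n : ℕ, MeasurableSet[natSigma X n] {ω | τ ω ≤ (n : ℕ∞)}

/-!
Split the first passage of the walk above `a` at its first weak ascending ladder epoch `T`
(the first `n ≥ 1` with `Xₙ ≥ X₀`). Logconcavity makes `g (x + t) / g x` nonincreasing in `x`;
since `X_T - X₀ ≥ 0` does not depend on the starting point, the hypothesis at `y` propagates to
`E_x[e^{-qT} g(X_T); T < ∞] ≤ g x` for every `x ≥ y`. On each event `{T = m}` the walk restarts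
at time `m` from `X_m ≥ x ≥ y`, independently of the past, so strong induction on a truncation
level `N` gives `E_x[e^{-qτ_a} g(X_{τ_a}); τ_a ≤ N] ≤ g x` for all `x ≥ y`, and monotone
convergence lets `N → ∞`.
-/

open scoped ENNReal

lemma Finset.sum_range_ite_eq_of_unique {M : Type*} [AddCommMonoid M] {P : ℕ → Prop}
    [DecidablePred P] {f : ℕ → M} {n N : ℕ} (hn : P n) (huniq : ∀ m, P m → m = n) (hN : n ≤ N) :
    ∑ m ∈ Finset.range (N + 1), (if P m then f m else 0) = f n := by
  rw [Finset.sum_eq_single n (fun m _ hm => if_neg (mt (huniq m) hm))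
    (fun h => absurd (Finset.mem_range.mpr (Nat.lt_succ_of_le hN)) h), if_pos hn]

lemma Finset.sum_range_ite_eq_zero {M : Type*} [AddCommMonoid M] {P : ℕ → Prop}
    [DecidablePred P] {f : ℕ → M} {N : ℕ} (h : ∀ n ≤ N, ¬ P n) :
    ∑ m ∈ Finset.range (N + 1), (if P m then f m else 0) = 0 :=
  Finset.sum_eq_zero fun m hm => if_neg (h m (Nat.lt_succ_iff.mp (Finset.mem_range.mp hm)))

lemma ENat.biInf_natCast_eq {A : Set ℕ} {n : ℕ} (hn : n ∈ A) (hmin : ∀ k ∈ A, n ≤ k) :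
    ⨅ k ∈ A, (k : ℕ∞) = n :=
  le_antisymm (iInf₂_le n hn) (le_iInf₂ fun k hk => by exact_mod_cast hmin k hk)

lemma ProbabilityTheory.IndepFun.lintegral_comp_eq {Ω α β : Type*} [MeasurableSpace Ω]
    [MeasurableSpace α] [MeasurableSpace β] {μ : Measure Ω} [IsFiniteMeasure μ] {X : Ω → α}
    {Y : Ω → β} (hXY : IndepFun X Y μ) (hX : Measurable X) (hY : Measurable Y)
    {F : α → β → ℝ≥0∞} (hF : Measurable (Function.uncurry F)) :
    ∫⁻ ω, F (X ω) (Y ω) ∂μ = ∫⁻ ω, ∫⁻ ω', F (X ω) (Y ω') ∂μ ∂μ := by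
  calc ∫⁻ ω, F (X ω) (Y ω) ∂μ
      = ∫⁻ p, Function.uncurry F p ∂(μ.map fun ω => (X ω, Y ω)) :=
        (lintegral_map hF (hX.prodMk hY)).symm
    _ = ∫⁻ p, Function.uncurry F p ∂((μ.map X).prod (μ.map Y)) := by
        rw [(indepFun_iff_map_prod_eq_prod_map_map hX.aemeasurable hY.aemeasurable).1 hXY]
    _ = ∫⁻ u, ∫⁻ v, F u v ∂(μ.map Y) ∂(μ.map X) := lintegral_prod _ hF.aemeasurable
    _ = ∫⁻ ω, ∫⁻ v, F (X ω) v ∂(μ.map Y) ∂μ := lintegral_map hF.lintegral_prod_right' hX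
    _ = ∫⁻ ω, ∫⁻ ω', F (X ω) (Y ω') ∂μ ∂μ :=
        lintegral_congr fun ω => lintegral_map (hF.comp measurable_prodMk_left) hY

namespace RandomWalk

def walkPath (x : ℝ) (s : ℕ → ℝ) (n : ℕ) : ℝ := x + ∑ i ∈ Finset.range n, s i

lemma walkPath_zero (x : ℝ) (s : ℕ → ℝ) : walkPath x s 0 = x := by simp [walkPath]

lemma walkPath_add (x : ℝ) (s : ℕ → ℝ) (m j : ℕ) :
    walkPath x s (m + j) = walkPath (walkPath x s m) (fun i => s (m + i)) j := by
  simp only [walkPath, Finset.sum_range_add, add_assoc]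

lemma walkPath_sub (x y : ℝ) (s : ℕ → ℝ) (n : ℕ) :
    walkPath x s n = x - y + walkPath y s n := by
  simp only [walkPath]; ring

lemma walkPath_congr {x : ℝ} {s s' : ℕ → ℝ} {m : ℕ} (h : ∀ i < m, s i = s' i) {n : ℕ}
    (hn : n ≤ m) : walkPath x s n = walkPath x s' n := by
  simp only [walkPath]
  congr 1
  exact Finset.sum_congr rfl fun i hi => h i ((Finset.mem_range.mp hi).trans_le hn)

lemma measurable_walkPath : Measurable fun p : ℝ × (ℕ → ℝ) => walkPath p.1 p.2 := by
  unfold walkPath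
  fun_prop

def IsFirstPassage (a : ℝ) (X : ℕ → ℝ) (n : ℕ) : Prop :=
  a ≤ X n ∧ ∀ j < n, X j < a

def IsLadderEpoch (X : ℕ → ℝ) (m : ℕ) : Prop :=
  1 ≤ m ∧ X 0 ≤ X m ∧ ∀ j, 1 ≤ j → j < m → X j < X 0

lemma measurableSet_isFirstPassage (a : ℝ) (n : ℕ) :
    MeasurableSet {X : ℕ → ℝ | IsFirstPassage a X n} := by
  unfold IsFirstPassage
  measurability

lemma measurableSet_isLadderEpoch (m : ℕ) :
    MeasurableSet {X : ℕ → ℝ | IsLadderEpoch X m} := by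
  unfold IsLadderEpoch
  measurability

lemma IsFirstPassage.unique {a : ℝ} {X : ℕ → ℝ} {n n' : ℕ} (h : IsFirstPassage a X n)
    (h' : IsFirstPassage a X n') : n = n' := by
  by_contra hne
  rcases Nat.lt_or_gt_of_ne hne with hlt | hlt
  · exact (h'.2 n hlt).not_ge h.1
  · exact (h.2 n' hlt).not_ge h'.1

lemma IsLadderEpoch.unique {X : ℕ → ℝ} {m m' : ℕ} (h : IsLadderEpoch X m)
    (h' : IsLadderEpoch X m') : m = m' := by
  by_contra hne
  rcases Nat.lt_or_gt_of_ne hne with hlt | hlt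
  · exact (h'.2.2 m h.1 hlt).not_ge h.2.1
  · exact (h.2.2 m' h'.1 hlt).not_ge h'.2.1

lemma isFirstPassage_zero {a : ℝ} {X : ℕ → ℝ} (h : a ≤ X 0) : IsFirstPassage a X 0 :=
  ⟨h, fun _ hj => absurd hj (Nat.not_lt_zero _)⟩

lemma isLadderEpoch_const_add (c : ℝ) (X : ℕ → ℝ) (m : ℕ) :
    IsLadderEpoch (fun n => c + X n) m ↔ IsLadderEpoch X m := by
  simp only [IsLadderEpoch, add_le_add_iff_left, add_lt_add_iff_left]

lemma isLadderEpoch_congr {X Y : ℕ → ℝ} {m : ℕ} (h : ∀ n ≤ m, X n = Y n) :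
    IsLadderEpoch X m ↔ IsLadderEpoch Y m := by
  simp +contextual only [IsLadderEpoch, h 0 (Nat.zero_le m), h m le_rfl,
    fun j (hj : j < m) => h j hj.le]

lemma IsFirstPassage.exists_isLadderEpoch {a : ℝ} {X : ℕ → ℝ} {n : ℕ} (h0 : X 0 < a)
    (h : IsFirstPassage a X n) :
    ∃ m ≤ n, IsLadderEpoch X m ∧ IsFirstPassage a (fun j => X (m + j)) (n - m) := by
  classical
  have hn : 1 ≤ n := Nat.one_le_iff_ne_zero.mpr fun hn => by
    subst hn; exact h.1.not_gt h0
  have hex : ∃ m, 1 ≤ m ∧ X 0 ≤ X m := ⟨n, hn, by linarith [h.1]⟩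
  have hmn : Nat.find hex ≤ n := Nat.find_min' hex ⟨hn, by linarith [h.1]⟩
  refine ⟨Nat.find hex, hmn, ⟨(Nat.find_spec hex).1, (Nat.find_spec hex).2, fun j hj hjm => ?_⟩,
    ?_, fun i hi => h.2 _ (by omega)⟩
  · exact not_le.mp fun hle => Nat.find_min hex hjm ⟨hj, hle⟩
  · show a ≤ X (_ + _); rw [Nat.add_sub_cancel' hmn]; exact h.1

lemma IsLadderEpoch.isFirstPassage_add {a : ℝ} {X : ℕ → ℝ} {m j : ℕ} (h0 : X 0 < a)
    (hm : IsLadderEpoch X m) (hj : IsFirstPassage a (fun i => X (m + i)) j) :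
    IsFirstPassage a X (m + j) := by
  refine ⟨hj.1, fun i hi => ?_⟩
  rcases lt_or_ge i m with him | him
  · rcases Nat.eq_zero_or_pos i with rfl | hi0
    · exact h0
    · exact (hm.2.2 i hi0 him).trans h0
  · obtain ⟨i, rfl⟩ := Nat.exists_eq_add_of_le him
    exact hj.2 i (by omega)

noncomputable def reward (q : ℝ) (g : ℝ → ℝ) (X : ℕ → ℝ) (n : ℕ) : ℝ≥0∞ :=
  ENNReal.ofReal (Real.exp (-q * n) * g (X n))

open Classical in
noncomputable def passageReward (a q : ℝ) (g : ℝ → ℝ) (X : ℕ → ℝ) (N : ℕ) : ℝ≥0∞ :=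
  ∑ n ∈ Finset.range (N + 1), if IsFirstPassage a X n then reward q g X n else 0

open Classical in
noncomputable def ladderReward (q : ℝ) (g : ℝ → ℝ) (X : ℕ → ℝ) (N : ℕ) : ℝ≥0∞ :=
  ∑ m ∈ Finset.range (N + 1), if IsLadderEpoch X m then reward q g X m else 0

variable {a q : ℝ} {g : ℝ → ℝ}

lemma reward_add (X : ℕ → ℝ) (m j : ℕ) :
    reward q g X (m + j)
      = ENNReal.ofReal (Real.exp (-q * m)) * reward q g (fun i => X (m + i)) j := by
  rw [reward, reward, ← ENNReal.ofReal_mul (Real.exp_nonneg _), ← mul_assoc, ← Real.exp_add]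
  push_cast
  ring_nf

lemma passageReward_of_isFirstPassage {X : ℕ → ℝ} {n N : ℕ} (hn : IsFirstPassage a X n)
    (hN : n ≤ N) : passageReward a q g X N = reward q g X n := by
  classical
  exact Finset.sum_range_ite_eq_of_unique hn (fun m hm => hm.unique hn) hN

lemma passageReward_eq_zero {X : ℕ → ℝ} {N : ℕ} (h : ∀ n ≤ N, ¬ IsFirstPassage a X n) :
    passageReward a q g X N = 0 := by
  classical
  exact Finset.sum_range_ite_eq_zero h

lemma ladderReward_of_isLadderEpoch {X : ℕ → ℝ} {m N : ℕ} (hm : IsLadderEpoch X m)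
    (hN : m ≤ N) : ladderReward q g X N = reward q g X m := by
  classical
  exact Finset.sum_range_ite_eq_of_unique hm (fun m' hm' => hm'.unique hm) hN

lemma ladderReward_eq_zero {X : ℕ → ℝ} {N : ℕ} (h : ∀ m ≤ N, ¬ IsLadderEpoch X m) :
    ladderReward q g X N = 0 := by
  classical
  exact Finset.sum_range_ite_eq_zero h

lemma monotone_passageReward (X : ℕ → ℝ) : Monotone (passageReward a q g X) := by
  classical
  refine monotone_nat_of_le_succ fun N => ?_
  rw [passageReward, passageReward, Finset.sum_range_succ _ (N + 1)]
  exact le_self_add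

open Classical in
noncomputable def restartReward (a q : ℝ) (g : ℝ → ℝ) (X : ℕ → ℝ) (m k : ℕ) : ℝ≥0∞ :=
  if IsLadderEpoch X m then
    ENNReal.ofReal (Real.exp (-q * m)) * passageReward a q g (fun j => X (m + j)) k
  else 0

lemma passageReward_eq_sum_restartReward {X : ℕ → ℝ} (h0 : X 0 < a) (N : ℕ) :
    passageReward a q g X N = ∑ m ∈ Finset.range (N + 1), restartReward a q g X m (N - m) := by
  classical
  unfold restartReward
  by_cases h : ∃ n ≤ N, IsFirstPassage a X n
  · obtain ⟨n, hnN, hn⟩ := h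
    obtain ⟨m, hmn, hm, hshift⟩ := hn.exists_isLadderEpoch h0
    rw [passageReward_of_isFirstPassage hn hnN,
      Finset.sum_range_ite_eq_of_unique hm (fun m' hm' => hm'.unique hm) (hmn.trans hnN),
      passageReward_of_isFirstPassage hshift (by omega), ← reward_add, Nat.add_sub_cancel' hmn]
  · push Not at h
    rw [passageReward_eq_zero h]
    refine (Finset.sum_eq_zero fun m hm => ?_).symm
    split_ifs with hlad
    · rw [passageReward_eq_zero fun j hj hpass => h _ ?_ (hlad.isFirstPassage_add h0 hpass),
        mul_zero]
      have := Finset.mem_range.mp hm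
      omega
    · rfl

lemma measurable_reward (hg : Measurable g) (n : ℕ) :
    Measurable fun X : ℕ → ℝ => reward q g X n := by
  unfold reward
  fun_prop

lemma measurable_passageReward (hg : Measurable g) (N : ℕ) :
    Measurable fun X : ℕ → ℝ => passageReward a q g X N := by
  classical
  exact Finset.measurable_sum _ fun n _ =>
    Measurable.ite (measurableSet_isFirstPassage a n) (measurable_reward hg n) measurable_const

lemma measurable_restartReward (hg : Measurable g) (m k : ℕ) :
    Measurable fun X : ℕ → ℝ => restartReward a q g X m k := by
  classical
  exact Measurable.ite (measurableSet_isLadderEpoch m)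
    (((measurable_passageReward hg k).comp (by fun_prop)).const_mul _) measurable_const

def IsLogConcave (g : ℝ → ℝ) : Prop :=
  ∀ a b θ : ℝ, 0 < θ → θ < 1 → g a ^ θ * g b ^ (1 - θ) ≤ g (θ * a + (1 - θ) * b)

lemma IsLogConcave.mul_le_mul_shift (hglc : IsLogConcave g) (hg0 : ∀ t, 0 ≤ g t)
    {x y t : ℝ} (hyx : y ≤ x) (ht : 0 ≤ t) :
    g y * g (x + t) ≤ g x * g (y + t) := by
  rcases hyx.eq_or_lt with rfl | hyx
  · exact le_rfl
  rcases ht.eq_or_lt with rfl | ht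
  · simpa only [add_zero] using (mul_comm (g y) (g x)).le
  -- `x` and `y + t` are the convex combinations of `y` and `x + t` with weights `θ` and `1 - θ`
  set θ := t / (x - y + t)
  have hθ0 : 0 < θ := div_pos ht (by linarith)
  have hθ1 : θ < 1 := (div_lt_one (by linarith)).mpr (by linarith)
  have hθ : θ * (x - y + t) = t := div_mul_cancel₀ t (by linarith)
  have hx : θ * y + (1 - θ) * (x + t) = x := by linear_combination -hθ
  have hyt : (1 - θ) * y + (1 - (1 - θ)) * (x + t) = y + t := by linear_combination hθ
  have h1 := hglc y (x + t) θ hθ0 hθ1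
  have h2 := hglc y (x + t) (1 - θ) (by linarith) (by linarith)
  rw [hx] at h1
  rw [hyt] at h2
  calc g y * g (x + t)
      = (g y ^ θ * g (x + t) ^ (1 - θ)) * (g y ^ (1 - θ) * g (x + t) ^ (1 - (1 - θ))) := by
        rw [mul_mul_mul_comm, ← Real.rpow_add' (hg0 _) (by norm_num),
          ← Real.rpow_add' (hg0 _) (by norm_num)]
        norm_num
    _ ≤ g x * g (y + t) := mul_le_mul h1 h2
        (mul_nonneg (Real.rpow_nonneg (hg0 _) _) (Real.rpow_nonneg (hg0 _) _)) (hg0 x)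

lemma ladderReward_mul_le (hg0 : ∀ t, 0 ≤ g t) (hglc : IsLogConcave g) {x y : ℝ} (hyx : y ≤ x)
    (s : ℕ → ℝ) (N : ℕ) :
    ladderReward q g (walkPath x s) N * ENNReal.ofReal (g y)
      ≤ ENNReal.ofReal (g x) * ladderReward q g (walkPath y s) N := by
  classical
  have hlad : ∀ m, IsLadderEpoch (walkPath x s) m ↔ IsLadderEpoch (walkPath y s) m := fun m => by
    rw [show walkPath x s = fun n => x - y + walkPath y s n from funext (walkPath_sub x y s)]
    exact isLadderEpoch_const_add _ _ m
  rw [ladderReward, ladderReward, Finset.sum_mul, Finset.mul_sum]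
  refine Finset.sum_le_sum fun m _ => ?_
  simp only [hlad]
  split_ifs with hm
  · have ht : 0 ≤ walkPath y s m - y := by
      have := hm.2.1; rw [walkPath_zero] at this; linarith
    have key := hglc.mul_le_mul_shift hg0 hyx ht
    rw [show x + (walkPath y s m - y) = walkPath x s m by rw [walkPath_sub x y]; ring,
      add_sub_cancel] at key
    rw [reward, reward, ← ENNReal.ofReal_mul (mul_nonneg (Real.exp_nonneg _) (hg0 _)),
      ← ENNReal.ofReal_mul (hg0 x)]
    refine ENNReal.ofReal_le_ofReal ?_
    calc Real.exp (-q * m) * g (walkPath x s m) * g y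
        = Real.exp (-q * m) * (g y * g (walkPath x s m)) := by ring
      _ ≤ Real.exp (-q * m) * (g x * g (walkPath y s m)) :=
          mul_le_mul_of_nonneg_left key (Real.exp_nonneg _)
      _ = g x * (Real.exp (-q * m) * g (walkPath y s m)) := by ring
  · simp

lemma hitFrom0_eq_of_isFirstPassage {X : ℕ → Ω → ℝ} {ω : Ω} {n : ℕ}
    (h : IsFirstPassage a (X · ω) n) : hitFrom0 X a ω = n :=
  ENat.biInf_natCast_eq h.1 fun k hk => not_lt.mp fun hlt => (h.2 k hlt).not_ge hk

lemma hitFrom1_eq_of_isLadderEpoch {X : ℕ → Ω → ℝ} {ω : Ω} {m : ℕ}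
    (h : IsLadderEpoch (X · ω) m) : hitFrom1 X (X 0 ω) ω = m :=
  ENat.biInf_natCast_eq ⟨h.1, h.2.1⟩ fun k hk => not_lt.mp fun hlt => (h.2.2 k hk.1 hlt).not_ge hk.2

lemma payoff_eq_reward {X : ℕ → Ω → ℝ} {τ : Ω → ℕ∞} {ω : Ω} {n : ℕ} (h : τ ω = n) :
    payoff q g X τ ω = reward q g (X · ω) n := by
  simp [payoff, h, reward]

lemma payoff_hitFrom0_le_iSup (X : ℕ → Ω → ℝ) (ω : Ω) :
    payoff q g X (hitFrom0 X a) ω ≤ ⨆ N, passageReward a q g (X · ω) N := by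
  classical
  by_cases h : ∃ n, a ≤ X n ω
  · have hn : IsFirstPassage a (X · ω) (Nat.find h) :=
      ⟨Nat.find_spec h, fun j hj => not_le.mp (Nat.find_min h hj)⟩
    rw [payoff_eq_reward (hitFrom0_eq_of_isFirstPassage hn),
      ← passageReward_of_isFirstPassage hn le_rfl]
    exact le_iSup (passageReward a q g (X · ω)) _
  · push Not at h
    have hτ : hitFrom0 X a ω = ⊤ := by simp [hitFrom0, not_le.mpr (h _)]
    simp [payoff, hτ]

lemma ladderReward_le_payoff_hitFrom1 (X : ℕ → Ω → ℝ) (ω : Ω) (N : ℕ) :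
    ladderReward q g (X · ω) N ≤ payoff q g X (hitFrom1 X (X 0 ω)) ω := by
  by_cases h : ∃ m ≤ N, IsLadderEpoch (X · ω) m
  · obtain ⟨m, hmN, hm⟩ := h
    rw [ladderReward_of_isLadderEpoch hm hmN, payoff_eq_reward (hitFrom1_eq_of_isLadderEpoch hm)]
  · push Not at h
    rw [ladderReward_eq_zero h]
    exact zero_le

def truncate (m : ℕ) (s : ℕ → ℝ) : ℕ → ℝ := fun i => if i < m then s i else 0

lemma measurable_truncate (m : ℕ) : Measurable (truncate m) :=
  measurable_pi_lambda _ fun i => by unfold truncate; split_ifs <;> fun_prop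

section Increments

variable [MeasurableSpace Ω] {μ : Measure Ω} {ξ : ℕ → Ω → ℝ}

-- `walk x ξ · ω` is `walkPath x (increments ξ ω)` by definition.
def increments (ξ : ℕ → Ω → ℝ) (ω : Ω) : ℕ → ℝ := fun i => ξ (i + 1) ω

lemma measurable_increments (hmeas : ∀ i, Measurable (ξ i)) : Measurable (increments ξ) :=
  measurable_pi_lambda _ fun i => hmeas (i + 1)

lemma map_increments_shift [IsProbabilityMeasure μ] (hmeas : ∀ i, Measurable (ξ i))
    (hindep : iIndepFun ξ μ) (hident : ∀ i, μ.map (ξ i) = μ.map (ξ 1)) (m : ℕ) :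
    μ.map (increments fun i => ξ (m + i)) = μ.map (increments ξ) := by
  have hlaw : ∀ m, μ.map (increments fun i => ξ (m + i))
      = Measure.infinitePi fun _ => μ.map (ξ 1) := fun m => by
    have hinj : Function.Injective fun i : ℕ => m + (i + 1) := fun i j h => by simpa using h
    show μ.map (fun ω i => ξ (m + (i + 1)) ω) = _
    rw [(hindep.precomp hinj).map_fun_eq_infinitePi_map fun i => hmeas _]
    exact congrArg Measure.infinitePi (funext fun i => hident _)
  simpa using (hlaw m).trans (hlaw 0).symm

lemma indepFun_truncate_increments_shift (hmeas : ∀ i, Measurable (ξ i))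
    (hindep : iIndepFun ξ μ) (m : ℕ) :
    IndepFun (fun ω => truncate m (increments ξ ω)) (increments fun i => ξ (m + i)) μ := by
  rw [IndepFun_iff_Indep]
  have hsplit := indep_iSup_of_disjoint (fun i => (hmeas i).comap_le) hindep.iIndep
    (Set.Iic_disjoint_Ioi (le_refl m))
  refine indep_of_indep_of_le_right (indep_of_indep_of_le_left hsplit ?_) ?_ <;>
    simp only [MeasurableSpace.pi, MeasurableSpace.comap_iSup, MeasurableSpace.comap_comp,
      iSup_le_iff] <;> intro i
  · by_cases hi : i < m
    · refine le_iSup₂_of_le (i + 1) (Set.mem_Iic.mpr hi) (le_of_eq ?_)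
      congr 1; funext ω; simp [truncate, increments, hi]
    · simp [Function.comp_def, truncate, hi]
  · exact le_iSup₂_of_le (m + (i + 1)) (Set.mem_Ioi.mpr (by omega)) le_rfl

lemma lintegral_increments_shift [IsProbabilityMeasure μ] (hmeas : ∀ i, Measurable (ξ i))
    (hindep : iIndepFun ξ μ) (hident : ∀ i, μ.map (ξ i) = μ.map (ξ 1)) (m : ℕ)
    {F : (ℕ → ℝ) → (ℕ → ℝ) → ℝ≥0∞} (hF : Measurable (Function.uncurry F))
    (hpast : ∀ s t, F (truncate m s) t = F s t) :
    ∫⁻ ω, F (increments ξ ω) (increments (fun i => ξ (m + i)) ω) ∂μ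
      = ∫⁻ ω, ∫⁻ ω', F (increments ξ ω) (increments ξ ω') ∂μ ∂μ := by
  have hshift := measurable_increments (ξ := fun i => ξ (m + i)) fun i => hmeas _
  simp_rw [← hpast (increments ξ _)]
  rw [(indepFun_truncate_increments_shift hmeas hindep m).lintegral_comp_eq
    ((measurable_truncate m).comp (measurable_increments hmeas)) hshift hF]
  refine lintegral_congr fun ω => ?_
  have hFω : Measurable (F (truncate m (increments ξ ω))) := hF.comp measurable_prodMk_left
  rw [← lintegral_map hFω hshift, map_increments_shift hmeas hindep hident m,
    lintegral_map hFω (measurable_increments hmeas)]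

lemma measurable_walkPath_increments (hmeas : ∀ i, Measurable (ξ i)) (x : ℝ) :
    Measurable fun ω => walkPath x (increments ξ ω) :=
  measurable_walkPath.comp (measurable_const.prodMk (measurable_increments hmeas))

end Increments

section Main

variable [MeasurableSpace Ω] {μ : Measure Ω} {ξ : ℕ → Ω → ℝ}

lemma lintegral_ladderReward_le (hg0 : ∀ t, 0 ≤ g t) (hglc : IsLogConcave g) {x y : ℝ}
    (hgy : 0 < g y)
    (hstop : ∫⁻ ω, payoff q g (walk y ξ) (hitFrom1 (walk y ξ) y) ω ∂μ ≤ ENNReal.ofReal (g y))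
    (hyx : y ≤ x) (N : ℕ) :
    ∫⁻ ω, ladderReward q g (walkPath x (increments ξ ω)) N ∂μ ≤ ENNReal.ofReal (g x) := by
  have hy : ∫⁻ ω, ladderReward q g (walkPath y (increments ξ ω)) N ∂μ ≤ ENNReal.ofReal (g y) := by
    refine (lintegral_mono fun ω => ?_).trans hstop
    have := ladderReward_le_payoff_hitFrom1 (q := q) (g := g) (walk y ξ) ω N
    rwa [show walk y ξ 0 ω = y from walkPath_zero y _] at this
  have hxy : (∫⁻ ω, ladderReward q g (walkPath x (increments ξ ω)) N ∂μ) * ENNReal.ofReal (g y)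
      ≤ ENNReal.ofReal (g x) * ∫⁻ ω, ladderReward q g (walkPath y (increments ξ ω)) N ∂μ := by
    rw [← lintegral_mul_const' _ _ ENNReal.ofReal_ne_top,
      ← lintegral_const_mul' _ _ ENNReal.ofReal_ne_top]
    exact lintegral_mono fun ω => ladderReward_mul_le hg0 hglc hyx _ N
  refine (ENNReal.mul_le_mul_iff_left (ENNReal.ofReal_pos.mpr hgy).ne' ENNReal.ofReal_ne_top).mp ?_
  exact hxy.trans (by gcongr)

open Classical in
lemma lintegral_restartReward_le [IsProbabilityMeasure μ] (hmeas : ∀ i, Measurable (ξ i))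
    (hindep : iIndepFun ξ μ) (hident : ∀ i, μ.map (ξ i) = μ.map (ξ 1)) (hg : Measurable g)
    {x y : ℝ} (hyx : y ≤ x)
    (m k : ℕ) (hk : ∀ z, y ≤ z →
      ∫⁻ ω, passageReward a q g (walkPath z (increments ξ ω)) k ∂μ ≤ ENNReal.ofReal (g z)) :
    ∫⁻ ω, restartReward a q g (walkPath x (increments ξ ω)) m k ∂μ
      ≤ ∫⁻ ω, (if IsLadderEpoch (walkPath x (increments ξ ω)) m then
          reward q g (walkPath x (increments ξ ω)) m else 0) ∂μ := by
  set F : (ℕ → ℝ) → (ℕ → ℝ) → ℝ≥0∞ := fun s t =>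
    if IsLadderEpoch (walkPath x s) m then
      ENNReal.ofReal (Real.exp (-q * m)) * passageReward a q g (walkPath (walkPath x s m) t) k
    else 0
  have hF : Measurable (Function.uncurry F) := by
    have hpath : Measurable fun p : (ℕ → ℝ) × (ℕ → ℝ) => walkPath x p.1 :=
      measurable_walkPath.comp (measurable_const.prodMk measurable_fst)
    refine Measurable.ite (hpath (measurableSet_isLadderEpoch m)) (Measurable.const_mul ?_ _)
      measurable_const
    exact (measurable_passageReward hg k).comp
      (measurable_walkPath.comp (((measurable_pi_apply m).comp hpath).prodMk measurable_snd))
  have hpast : ∀ s t, F (truncate m s) t = F s t := by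
    intro s t
    have hagree : ∀ n ≤ m, walkPath x (truncate m s) n = walkPath x s n :=
      fun n hn => walkPath_congr (fun i hi => if_pos hi) hn
    simp only [F, hagree m le_rfl, isLadderEpoch_congr hagree]
  have hsplit : ∀ ω, restartReward a q g (walkPath x (increments ξ ω)) m k
      = F (increments ξ ω) (increments (fun i => ξ (m + i)) ω) := fun ω => by
    simp only [restartReward, F, walkPath_add]
    rfl
  calc ∫⁻ ω, restartReward a q g (walkPath x (increments ξ ω)) m k ∂μ
      = ∫⁻ ω, F (increments ξ ω) (increments (fun i => ξ (m + i)) ω) ∂μ := lintegral_congr hsplit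
    _ = ∫⁻ ω, ∫⁻ ω', F (increments ξ ω) (increments ξ ω') ∂μ ∂μ :=
        lintegral_increments_shift hmeas hindep hident m hF hpast
    _ ≤ _ := lintegral_mono fun ω => ?_
  simp only [F]
  split_ifs with hm
  · rw [lintegral_const_mul' _ _ ENNReal.ofReal_ne_top]
    unfold reward
    rw [ENNReal.ofReal_mul (Real.exp_nonneg _)]
    gcongr
    refine hk _ (hyx.trans ?_)
    simpa only [walkPath_zero] using hm.2.1
  · simp

lemma lintegral_passageReward_le [IsProbabilityMeasure μ] (hmeas : ∀ i, Measurable (ξ i))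
    (hindep : iIndepFun ξ μ) (hident : ∀ i, μ.map (ξ i) = μ.map (ξ 1)) (hg : Measurable g)
    (hg0 : ∀ t, 0 ≤ g t) (hglc : IsLogConcave g) {y : ℝ} (hgy : 0 < g y)
    (hstop : ∫⁻ ω, payoff q g (walk y ξ) (hitFrom1 (walk y ξ) y) ω ∂μ ≤ ENNReal.ofReal (g y))
    (N : ℕ) {x : ℝ} (hyx : y ≤ x) :
    ∫⁻ ω, passageReward a q g (walkPath x (increments ξ ω)) N ∂μ ≤ ENNReal.ofReal (g x) := by
  classical
  induction N using Nat.strong_induction_on generalizing x with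
  | _ N IH =>
  rcases le_or_gt a x with hax | hxa
  · have hstart : ∀ ω,
        passageReward a q g (walkPath x (increments ξ ω)) N = ENNReal.ofReal (g x) := fun ω => by
        rw [passageReward_of_isFirstPassage (isFirstPassage_zero (by rwa [walkPath_zero]))
          (Nat.zero_le N)]
        simp [reward, walkPath_zero]
    simp [hstart]
  have hX := measurable_walkPath_increments hmeas x
  calc ∫⁻ ω, passageReward a q g (walkPath x (increments ξ ω)) N ∂μ
      = ∑ m ∈ Finset.range (N + 1),
          ∫⁻ ω, restartReward a q g (walkPath x (increments ξ ω)) m (N - m) ∂μ := by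
        refine (lintegral_congr fun ω =>
          passageReward_eq_sum_restartReward (by rwa [walkPath_zero]) N).trans ?_
        exact lintegral_finsetSum _ fun m _ => (measurable_restartReward hg m _).comp hX
    _ ≤ ∑ m ∈ Finset.range (N + 1),
          ∫⁻ ω, (if IsLadderEpoch (walkPath x (increments ξ ω)) m then
            reward q g (walkPath x (increments ξ ω)) m else 0) ∂μ := by
        refine Finset.sum_le_sum fun m hm => ?_
        rcases Nat.eq_zero_or_pos m with rfl | hm0
        · simp [restartReward, IsLadderEpoch]
        · exact lintegral_restartReward_le hmeas hindep hident hg hyx m (N - m)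
            fun z hz => IH (N - m) (by have := Finset.mem_range.mp hm; omega) hz
    _ = ∫⁻ ω, ladderReward q g (walkPath x (increments ξ ω)) N ∂μ :=
        (lintegral_finsetSum _ fun m _ => (Measurable.ite (measurableSet_isLadderEpoch m)
          (measurable_reward hg m) measurable_const).comp hX).symm
    _ ≤ ENNReal.ofReal (g x) := lintegral_ladderReward_le hg0 hglc hgy hstop hyx N

lemma lintegral_payoff_hitFrom0_le [IsProbabilityMeasure μ] (hmeas : ∀ i, Measurable (ξ i))
    (hg : Measurable g) {y : ℝ} {C : ℝ≥0∞}
    (h : ∀ N, ∫⁻ ω, passageReward a q g (walkPath y (increments ξ ω)) N ∂μ ≤ C) :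
    ∫⁻ ω, payoff q g (walk y ξ) (hitFrom0 (walk y ξ) a) ω ∂μ ≤ C :=
  calc ∫⁻ ω, payoff q g (walk y ξ) (hitFrom0 (walk y ξ) a) ω ∂μ
      ≤ ∫⁻ ω, ⨆ N, passageReward a q g (walkPath y (increments ξ ω)) N ∂μ :=
        lintegral_mono fun ω => payoff_hitFrom0_le_iSup (walk y ξ) ω
    _ = ⨆ N, ∫⁻ ω, passageReward a q g (walkPath y (increments ξ ω)) N ∂μ :=
        lintegral_iSup (fun N => (measurable_passageReward hg N).comp
          (measurable_walkPath_increments hmeas y)) fun _ _ h _ => monotone_passageReward _ h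
    _ ≤ C := iSup_le h

end Main

end RandomWalk

theorem stmt10_general [MeasurableSpace Ω] (μ : Measure Ω) [IsProbabilityMeasure μ]
    (ξ : ℕ → Ω → ℝ) (hmeas : ∀ i, Measurable (ξ i))
    (hindep : iIndepFun ξ μ)
    (hident : ∀ i, μ.map (ξ i) = μ.map (ξ 1))
    (q : ℝ)
    (g : ℝ → ℝ) (hg0 : ∀ x, 0 ≤ g x)
    (hgmono : Monotone g)
    (hglc : ∀ a b θ : ℝ, 0 < θ → θ < 1 →
      g a ^ θ * g b ^ (1 - θ) ≤ g (θ * a + (1 - θ) * b))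
    (y : ℝ) (hy : ∃ s : ℝ, s < y ∧ 0 < g s)
    (hstop : (∫⁻ ω, payoff q g (walk y ξ) (hitFrom1 (walk y ξ) y) ω ∂μ)
      ≤ ENNReal.ofReal (g y)) :
    ∀ a : ℝ, y < a →
      (∫⁻ ω, payoff q g (walk y ξ) (hitFrom0 (walk y ξ) a) ω ∂μ)
        ≤ ENNReal.ofReal (g y) := by
  intro a _
  obtain ⟨s, hsy, hgs⟩ := hy
  have hg : Measurable g := hgmono.measurable
  exact RandomWalk.lintegral_payoff_hitFrom0_le hmeas hg fun N =>
    RandomWalk.lintegral_passageReward_le hmeas hindep hident hg hg0 hglc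
      (hgs.trans_le (hgmono hsy.le)) hstop N le_rfl

/-- Lemma 2.4(ii): random walk with `P(ξ>0)>0`, `q ≥ 0`, and `g`
nonnegative, nonconstant, nondecreasing, logconcave. If
`E_y[e^{-qT_y} g(X_{T_y}) 1_{T_y<∞}] ≤ g(y)` for some `y` above
`x₀ = inf {s : g s > 0}` (i.e. `∃ s < y, g s > 0`), then
`g(y) ≥ E_y[e^{-qτ_a} g(X_{τ_a}) 1_{τ_a<∞}]` for every `a > y`. -/
theorem stmt10 [MeasurableSpace Ω] (μ : Measure Ω) [IsProbabilityMeasure μ]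
    (ξ : ℕ → Ω → ℝ) (hmeas : ∀ i, Measurable (ξ i))
    (hindep : iIndepFun ξ μ)
    (hident : ∀ i, μ.map (ξ i) = μ.map (ξ 1))
    (hξpos : 0 < μ {ω | 0 < ξ 1 ω})
    (q : ℝ) (hq : 0 ≤ q)
    (g : ℝ → ℝ) (hg0 : ∀ x, 0 ≤ g x) (hgnc : ∃ a b : ℝ, g a ≠ g b)
    (hgmono : Monotone g)
    (hglc : ∀ a b θ : ℝ, 0 < θ → θ < 1 →
      g a ^ θ * g b ^ (1 - θ) ≤ g (θ * a + (1 - θ) * b))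
    (y : ℝ) (hy : ∃ s : ℝ, s < y ∧ 0 < g s)
    (hstop : (∫⁻ ω, payoff q g (walk y ξ) (hitFrom1 (walk y ξ) y) ω ∂μ)
      ≤ ENNReal.ofReal (g y)) :
    ∀ a : ℝ, y < a →
      (∫⁻ ω, payoff q g (walk y ξ) (hitFrom0 (walk y ξ) a) ω ∂μ)
        ≤ ENNReal.ofReal (g y) :=
  stmt10_general μ ξ hmeas hindep hident q g hg0 hgmono hglc y hy hstop
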